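/- arXiv:1604.04413 — 2 statements merged into one kernel-verified Lean document; each statement's English description precedes it below -/
import Mathlib

section
/- Let q = p^m be a prime power (p prime, m ≥ 1) and let (ε_d : d ∈ D_q) be a probability vector on the set D_q of positive divisors of q. Then ln( Σ_{d ∈ D_q} ε_d^− · d ) + ln( Σ_{d ∈ D_q} ε_d^+ · d ) ≤ 2 · ln( Σ_{d ∈ D_q} ε_d · d ). -/
/-!
Divisors of a prime power form a chain under divisibility, so `gcd a b + lcm a b = a + b` for
any two of them. Writing `A`, `B`, `S` for the means of `gcd`, `lcm` and `d` (the first two over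
independent pairs), this gives `A + B = 2 S`, and AM-GM yields `A B ≤ S²`. Since `A, B ≥ 1`, the
logarithms involved are the genuine ones.
-/

open Finset

/-- `ε_d^− := Σ_{(d₁,d₂) ∈ D_q × D_q, gcd(d₁,d₂) = d} ε_{d₁}·ε_{d₂}`. -/
noncomputable def epsMinus (q : ℕ) (ε : ℕ → ℝ) (d : ℕ) : ℝ :=
  ∑ x ∈ (q.divisors ×ˢ q.divisors).filter (fun x => Nat.gcd x.1 x.2 = d), ε x.1 * ε x.2

/-- `ε_d^+ := Σ_{(d₁,d₂) ∈ D_q × D_q, lcm(d₁,d₂) = d} ε_{d₁}·ε_{d₂}`. -/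
noncomputable def epsPlus (q : ℕ) (ε : ℕ → ℝ) (d : ℕ) : ℝ :=
  ∑ x ∈ (q.divisors ×ˢ q.divisors).filter (fun x => Nat.lcm x.1 x.2 = d), ε x.1 * ε x.2

theorem Finset.sum_fiberwise_mul_of_mapsTo {ι κ R : Type*} [DecidableEq κ] [CommSemiring R]
    {s : Finset ι} {t : Finset κ} {f : ι → κ} (hf : ∀ x ∈ s, f x ∈ t) (w : ι → R) (g : κ → R) :
    ∑ y ∈ t, (∑ x ∈ s with f x = y, w x) * g y = ∑ x ∈ s, w x * g (f x) := by
  rw [← sum_fiberwise_of_maps_to hf]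
  refine sum_congr rfl fun y _ => ?_
  rw [sum_mul]
  exact sum_congr rfl fun x hx => by rw [(mem_filter.mp hx).2]

theorem Nat.dvd_or_dvd_of_dvd_prime_pow {p m a b : ℕ} (hp : p.Prime) (ha : a ∣ p ^ m)
    (hb : b ∣ p ^ m) : a ∣ b ∨ b ∣ a := by
  obtain ⟨i, -, rfl⟩ := (Nat.dvd_prime_pow hp).mp ha
  obtain ⟨j, -, rfl⟩ := (Nat.dvd_prime_pow hp).mp hb
  exact (le_total i j).imp (pow_dvd_pow p) (pow_dvd_pow p)

theorem Nat.gcd_add_lcm_of_dvd_or_dvd {a b : ℕ} (h : a ∣ b ∨ b ∣ a) :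
    Nat.gcd a b + Nat.lcm a b = a + b := by
  rcases h with h | h
  · rw [Nat.gcd_eq_left h, Nat.lcm_eq_right h]
  · rw [Nat.gcd_eq_right h, Nat.lcm_eq_left h, add_comm]

section ProductWeights

variable {ι : Type*} {s : Finset ι}

theorem sum_product_mul_mul_add (w g : ι → ℝ) :
    ∑ x ∈ s ×ˢ s, w x.1 * w x.2 * (g x.1 + g x.2)
      = 2 * (∑ i ∈ s, w i) * ∑ i ∈ s, w i * g i := by
  have h₁ : ∑ x ∈ s ×ˢ s, w x.1 * w x.2 * g x.1 = (∑ i ∈ s, w i * g i) * ∑ j ∈ s, w j := by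
    rw [sum_mul_sum, sum_product]
    simp only [mul_right_comm]
  have h₂ : ∑ x ∈ s ×ˢ s, w x.1 * w x.2 * g x.2 = (∑ i ∈ s, w i) * ∑ j ∈ s, w j * g j := by
    rw [sum_mul_sum, sum_product]
    simp only [mul_assoc]
  simp only [mul_add, sum_add_distrib, h₁, h₂]
  ring

theorem one_le_sum_product_mul_mul {w : ι → ℝ} (hw : ∀ i ∈ s, 0 ≤ w i) (hw1 : ∑ i ∈ s, w i = 1)
    {g : ι × ι → ℝ} (hg : ∀ x ∈ s ×ˢ s, 1 ≤ g x) :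
    1 ≤ ∑ x ∈ s ×ˢ s, w x.1 * w x.2 * g x :=
  calc (1 : ℝ) = ∑ x ∈ s ×ˢ s, w x.1 * w x.2 := by
        rw [sum_product, ← sum_mul_sum, hw1, one_mul]
    _ ≤ _ := sum_le_sum fun x hx => by
        have hx' := mem_product.mp hx
        exact le_mul_of_one_le_right (mul_nonneg (hw _ hx'.1) (hw _ hx'.2)) (hg x hx)

end ProductWeights

theorem Nat.gcd_mem_divisors {a b q : ℕ} (ha : a ∈ q.divisors) : Nat.gcd a b ∈ q.divisors :=
  Nat.mem_divisors.mpr ⟨(Nat.gcd_dvd_left a b).trans (Nat.dvd_of_mem_divisors ha),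
    Nat.ne_zero_of_mem_divisors ha⟩

theorem Nat.lcm_mem_divisors {a b q : ℕ} (ha : a ∈ q.divisors) (hb : b ∈ q.divisors) :
    Nat.lcm a b ∈ q.divisors :=
  Nat.mem_divisors.mpr ⟨Nat.lcm_dvd (Nat.dvd_of_mem_divisors ha) (Nat.dvd_of_mem_divisors hb),
    Nat.ne_zero_of_mem_divisors ha⟩

section DivisorWeights

variable {q : ℕ} (ε : ℕ → ℝ)

theorem sum_epsMinus_mul_eq :
    ∑ d ∈ q.divisors, epsMinus q ε d * (d : ℝ)
      = ∑ x ∈ q.divisors ×ˢ q.divisors, ε x.1 * ε x.2 * (Nat.gcd x.1 x.2 : ℝ) :=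
  sum_fiberwise_mul_of_mapsTo (fun _ hx => Nat.gcd_mem_divisors (mem_product.mp hx).1) _ _

theorem sum_epsPlus_mul_eq :
    ∑ d ∈ q.divisors, epsPlus q ε d * (d : ℝ)
      = ∑ x ∈ q.divisors ×ˢ q.divisors, ε x.1 * ε x.2 * (Nat.lcm x.1 x.2 : ℝ) :=
  sum_fiberwise_mul_of_mapsTo (fun _ hx => (mem_product.mp hx).elim Nat.lcm_mem_divisors) _ _

variable {ε}

theorem one_le_sum_epsMinus_mul (hε : ∀ d ∈ q.divisors, 0 ≤ ε d)
    (hsum : ∑ d ∈ q.divisors, ε d = 1) : 1 ≤ ∑ d ∈ q.divisors, epsMinus q ε d * (d : ℝ) := by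
  rw [sum_epsMinus_mul_eq]
  refine one_le_sum_product_mul_mul hε hsum fun x hx => ?_
  exact_mod_cast Nat.pos_of_mem_divisors (Nat.gcd_mem_divisors (mem_product.mp hx).1)

theorem one_le_sum_epsPlus_mul (hε : ∀ d ∈ q.divisors, 0 ≤ ε d)
    (hsum : ∑ d ∈ q.divisors, ε d = 1) : 1 ≤ ∑ d ∈ q.divisors, epsPlus q ε d * (d : ℝ) := by
  rw [sum_epsPlus_mul_eq]
  refine one_le_sum_product_mul_mul hε hsum fun x hx => ?_
  exact_mod_cast Nat.pos_of_mem_divisors ((mem_product.mp hx).elim Nat.lcm_mem_divisors)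

theorem sum_epsMinus_mul_add_sum_epsPlus_mul_of_prime_pow {p m : ℕ} (hp : p.Prime)
    (hq : q = p ^ m) (hsum : ∑ d ∈ q.divisors, ε d = 1) :
    ∑ d ∈ q.divisors, epsMinus q ε d * (d : ℝ) + ∑ d ∈ q.divisors, epsPlus q ε d * (d : ℝ)
      = 2 * ∑ d ∈ q.divisors, ε d * (d : ℝ) := by
  subst hq
  rw [sum_epsMinus_mul_eq, sum_epsPlus_mul_eq, ← sum_add_distrib, ← mul_one 2, ← hsum,
    ← sum_product_mul_mul_add]
  refine sum_congr rfl fun x hx => ?_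
  obtain ⟨h₁, h₂⟩ := mem_product.mp hx
  have h : (Nat.gcd x.1 x.2 : ℝ) + Nat.lcm x.1 x.2 = x.1 + x.2 := by
    exact_mod_cast Nat.gcd_add_lcm_of_dvd_or_dvd <| Nat.dvd_or_dvd_of_dvd_prime_pow hp
      (Nat.dvd_of_mem_divisors h₁) (Nat.dvd_of_mem_divisors h₂)
  rw [← mul_add, h]

end DivisorWeights

theorem Real.log_add_log_le_two_mul_log_of_add_eq {a b c : ℝ} (ha : 0 < a) (hb : 0 < b)
    (habc : a + b = 2 * c) : Real.log a + Real.log b ≤ 2 * Real.log c := by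
  have hc : 0 < c := by linarith
  rw [← Real.log_mul ha.ne' hb.ne', two_mul, ← Real.log_mul hc.ne' hc.ne']
  exact Real.log_le_log (mul_pos ha hb) (by nlinarith [sq_nonneg (a - b)])

theorem stmt_13_general (p m q : ℕ) (hp : p.Prime) (hq : q = p ^ m)
    (ε : ℕ → ℝ) (hε : ∀ d ∈ q.divisors, 0 ≤ ε d) (hsum : ∑ d ∈ q.divisors, ε d = 1) :
    Real.log (∑ d ∈ q.divisors, epsMinus q ε d * (d : ℝ))
        + Real.log (∑ d ∈ q.divisors, epsPlus q ε d * (d : ℝ))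
      ≤ 2 * Real.log (∑ d ∈ q.divisors, ε d * (d : ℝ)) :=
  Real.log_add_log_le_two_mul_log_of_add_eq
    (one_pos.trans_le (one_le_sum_epsMinus_mul hε hsum))
    (one_pos.trans_le (one_le_sum_epsPlus_mul hε hsum))
    (sum_epsMinus_mul_add_sum_epsPlus_mul_of_prime_pow hp hq hsum)

/-- Let `q = p^m` be a prime power and `(ε_d : d ∈ D_q)` a probability vector on the
positive divisors of `q`.  Then
`ln(Σ_{d ∈ D_q} ε_d^−·d) + ln(Σ_{d ∈ D_q} ε_d^+·d) ≤ 2·ln(Σ_{d ∈ D_q} ε_d·d)`. -/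
theorem stmt_13 (p m q : ℕ) (hp : p.Prime) (hm : 1 ≤ m) (hq : q = p ^ m)
    (ε : ℕ → ℝ) (hε : ∀ d ∈ q.divisors, 0 ≤ ε d) (hsum : ∑ d ∈ q.divisors, ε d = 1) :
    Real.log (∑ d ∈ q.divisors, epsMinus q ε d * (d : ℝ))
        + Real.log (∑ d ∈ q.divisors, epsPlus q ε d * (d : ℝ))
      ≤ 2 * Real.log (∑ d ∈ q.divisors, ε d * (d : ℝ)) :=
  stmt_13_general p m q hp hq ε hε hsum
end

section
/- For each r with 0 ≤ r ≤ m, the sequence (E_{r,n})_{n ≥ 0} converges μ-almost surely to a random variable E_{r,∞} taking values in {0, 1}, and μ( { ω ∈ Ω : E_{r,∞}(ω) = 1 } ) = ε_r, hence μ( { ω ∈ Ω : E_{r,∞}(ω) = 0 } ) = 1 − ε_r. -/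
open Finset MeasureTheory Filter

/-- The polarization process `E_{r,n}` on `Ω = ℕ → Bool` (`false` = `−`, `true` = `+`):
`E_{r,0} = ε_r` and, depending on the `(n+1)`-th coordinate of `ω`,
`E_{r,n+1} = E_{r,n}·(E_{r,n} + 2·Σ_{t=r+1}^{m} E_{t,n})` (coordinate `−`) or
`E_{r,n+1} = E_{r,n}·(E_{r,n} + 2·Σ_{t=0}^{r−1} E_{t,n})` (coordinate `+`). -/
noncomputable def Eproc (m : ℕ) (ε : ℕ → ℝ) : ℕ → (ℕ → Bool) → ℕ → ℝ
  | 0, _, r => ε r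
  | n + 1, ω, r =>
      if ω n = false then
        Eproc m ε n ω r * (Eproc m ε n ω r + 2 * ∑ t ∈ Finset.Icc (r + 1) m, Eproc m ε n ω t)
      else
        Eproc m ε n ω r * (Eproc m ε n ω r + 2 * ∑ t ∈ Finset.range r, Eproc m ε n ω t)

/-!
The partial sums `F_{k,n} = E_{0,n} + ⋯ + E_{k-1,n}` evolve autonomously: a `−` toss sends `F`
to `2F − F²` and a `+` toss to `F²`, i.e. `F_{k,n+1} = F_{k,n} + F_{k,n} (1 − F_{k,n}) ξ_n` with a
fair sign `ξ_n = ±1` independent of the first `n` tosses. So each `F_k` is a `[0,1]`-valued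
martingale; it converges almost surely, and since its increments `F (1 − F)` tend to `0`, the
limit is `0` or `1`, with mean `F_{k,0} = ε_0 + ⋯ + ε_{k-1}`. Finally
`E_{r,∞} = F_{r+1,∞} − F_{r,∞}` is `{0,1}`-valued with mean `ε_r`.
-/

open Topology

lemma sum_range_mul_add_two_mul_sum_range (a : ℕ → ℝ) (k : ℕ) :
    ∑ t ∈ range k, a t * (a t + 2 * ∑ s ∈ range t, a s) = (∑ t ∈ range k, a t) ^ 2 := by
  induction k with
  | zero => simp
  | succ k ih => rw [sum_range_succ, sum_range_succ, ih]; ring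

lemma sum_range_mul_add_two_mul_sum_Icc (a : ℕ → ℝ) {m k : ℕ} (hk : k ≤ m + 1)
    (ha : ∑ t ∈ range (m + 1), a t = 1) :
    ∑ t ∈ range k, a t * (a t + 2 * ∑ s ∈ Icc (t + 1) m, a s)
      = 2 * ∑ t ∈ range k, a t - (∑ t ∈ range k, a t) ^ 2 := by
  have htail : ∀ t ∈ range k, ∑ s ∈ Icc (t + 1) m, a s = 1 - ∑ s ∈ range (t + 1), a s := by
    intro t ht
    rw [← ha, ← sum_range_add_sum_Ico a (show t + 1 ≤ m + 1 by grind),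
      ← Ico_add_one_right_eq_Icc]
    ring
  rw [sum_congr rfl fun t ht => by rw [htail t ht], ← sum_range_mul_add_two_mul_sum_range,
    mul_sum, ← sum_sub_distrib]
  refine sum_congr rfl fun t _ => ?_
  rw [sum_range_succ]
  ring

noncomputable def coinSign (n : ℕ) (ω : ℕ → Bool) : ℝ := if ω n = false then 1 else -1

noncomputable def cumEproc (m : ℕ) (ε : ℕ → ℝ) (k n : ℕ) (ω : ℕ → Bool) : ℝ :=
  ∑ t ∈ range k, Eproc m ε n ω t

section Eproc

variable {m : ℕ} {ε : ℕ → ℝ}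

lemma Eproc_succ (n : ℕ) (ω : ℕ → Bool) (r : ℕ) :
    Eproc m ε (n + 1) ω r =
      if ω n = false then
        Eproc m ε n ω r * (Eproc m ε n ω r + 2 * ∑ t ∈ Icc (r + 1) m, Eproc m ε n ω t)
      else
        Eproc m ε n ω r * (Eproc m ε n ω r + 2 * ∑ t ∈ range r, Eproc m ε n ω t) := rfl

lemma Eproc_nonneg (hε : ∀ r ≤ m, 0 ≤ ε r) (n : ℕ) (ω : ℕ → Bool) {r : ℕ} (hr : r ≤ m) :
    0 ≤ Eproc m ε n ω r := by
  induction n generalizing r with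
  | zero => exact hε r hr
  | succ n ih =>
    rw [Eproc_succ]
    split_ifs
    · exact mul_nonneg (ih hr) (add_nonneg (ih hr) (mul_nonneg zero_le_two
        (sum_nonneg fun t ht => ih (mem_Icc.1 ht).2)))
    · exact mul_nonneg (ih hr) (add_nonneg (ih hr) (mul_nonneg zero_le_two
        (sum_nonneg fun t ht => ih ((mem_range.1 ht).le.trans hr))))

lemma cumEproc_succ_of_sum_eq_one {n : ℕ} {ω : ℕ → Bool}
    (htot : ∑ t ∈ range (m + 1), Eproc m ε n ω t = 1) {k : ℕ} (hk : k ≤ m + 1) :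
    cumEproc m ε k (n + 1) ω
      = cumEproc m ε k n ω + cumEproc m ε k n ω * (1 - cumEproc m ε k n ω) * coinSign n ω := by
  simp only [cumEproc, coinSign, Eproc_succ]
  split_ifs
  · rw [sum_range_mul_add_two_mul_sum_Icc _ hk htot]; ring
  · rw [sum_range_mul_add_two_mul_sum_range]; ring

lemma sum_Eproc_eq_one (hsum : ∑ r ∈ range (m + 1), ε r = 1) (n : ℕ) (ω : ℕ → Bool) :
    ∑ t ∈ range (m + 1), Eproc m ε n ω t = 1 := by
  induction n with
  | zero => exact hsum
  | succ n ih =>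
    have := cumEproc_succ_of_sum_eq_one ih le_rfl
    simp only [cumEproc, ih] at this
    simpa using this

lemma cumEproc_succ (hsum : ∑ r ∈ range (m + 1), ε r = 1) {k : ℕ} (hk : k ≤ m + 1) (n : ℕ)
    (ω : ℕ → Bool) :
    cumEproc m ε k (n + 1) ω
      = cumEproc m ε k n ω + cumEproc m ε k n ω * (1 - cumEproc m ε k n ω) * coinSign n ω :=
  cumEproc_succ_of_sum_eq_one (sum_Eproc_eq_one hsum n ω) hk

lemma cumEproc_mem_Icc (hε : ∀ r ≤ m, 0 ≤ ε r) (hsum : ∑ r ∈ range (m + 1), ε r = 1) {k : ℕ}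
    (hk : k ≤ m + 1) (n : ℕ) (ω : ℕ → Bool) : cumEproc m ε k n ω ∈ Set.Icc 0 1 := by
  have hnonneg : ∀ t ∈ range (m + 1), 0 ≤ Eproc m ε n ω t :=
    fun t ht => Eproc_nonneg hε n ω (Nat.lt_succ_iff.1 (mem_range.1 ht))
  refine ⟨sum_nonneg fun t ht => hnonneg t (range_mono hk ht), ?_⟩
  rw [← sum_Eproc_eq_one hsum n ω]
  exact sum_le_sum_of_subset_of_nonneg (range_mono hk) fun t ht _ => hnonneg t ht

lemma Eproc_eq_of_forall_lt_eq {n : ℕ} {ω ω' : ℕ → Bool} (h : ∀ i < n, ω i = ω' i) (r : ℕ) :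
    Eproc m ε n ω r = Eproc m ε n ω' r := by
  induction n generalizing r with
  | zero => rfl
  | succ n ih =>
    have ih' := fun t => ih (fun i hi => h i (hi.trans n.lt_succ_self)) t
    simp only [Eproc_succ, h n n.lt_succ_self, ih']

end Eproc

lemma eq_zero_or_eq_one_of_tendsto_of_abs_sub_eq {x : ℕ → ℝ} {L : ℝ}
    (hx : Tendsto x atTop (𝓝 L)) (hstep : ∀ n, |x (n + 1) - x n| = |x n * (1 - x n)|) :
    L = 0 ∨ L = 1 := by
  have hdiff : Tendsto (fun n => |x (n + 1) - x n|) atTop (𝓝 0) := by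
    simpa using ((hx.comp (tendsto_add_atTop_nat 1)).sub hx).abs
  simp only [hstep] at hdiff
  have hlim := tendsto_nhds_unique ((hx.mul (tendsto_const_nhds.sub hx)).abs) hdiff
  rcases mul_eq_zero.1 (abs_eq_zero.1 hlim) with h | h
  · exact Or.inl h
  · exact Or.inr (by linarith)

section

variable {Ω : Type*} {m0 : MeasurableSpace Ω} {μ : Measure Ω} [IsProbabilityMeasure μ]
  {ℱ : Filtration ℕ m0} {f : ℕ → Ω → ℝ} {C : ℝ}

lemma MeasureTheory.Martingale.ae_tendsto_limitProcess_of_abs_le (hf : Martingale f ℱ μ)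
    (hC : ∀ n ω, |f n ω| ≤ C) :
    ∀ᵐ ω ∂μ, Tendsto (fun n => f n ω) atTop (𝓝 (ℱ.limitProcess f μ ω)) := by
  refine hf.submartingale.ae_tendsto_limitProcess (R := C.toNNReal) fun n => ?_
  refine (eLpNorm_le_of_ae_bound (ae_of_all _ (hC n))).trans ?_
  simp

lemma MeasureTheory.Martingale.integral_limitProcess_of_abs_le (hf : Martingale f ℱ μ)
    (hC : ∀ n ω, |f n ω| ≤ C) :
    ∫ ω, ℱ.limitProcess f μ ω ∂μ = ∫ ω, f 0 ω ∂μ := by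
  have hconst : ∀ n, ∫ ω, f n ω ∂μ = ∫ ω, f 0 ω ∂μ := fun n => by
    simpa using (hf.setIntegral_eq (Nat.zero_le n) MeasurableSet.univ).symm
  have hlim := tendsto_integral_of_dominated_convergence (fun _ => C)
    (fun n => ((hf.stronglyMeasurable n).mono (ℱ.le n)).aestronglyMeasurable)
    (integrable_const C) (fun n => ae_of_all _ (hC n)) (hf.ae_tendsto_limitProcess_of_abs_le hC)
  simp only [hconst] at hlim
  exact tendsto_nhds_unique hlim tendsto_const_nhds

lemma measure_eq_ofReal_integral_of_ae_eq_zero_or_eq_one {X : Ω → ℝ}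
    (hX : Measurable X) (h01 : ∀ᵐ ω ∂μ, X ω = 0 ∨ X ω = 1) :
    μ {ω | X ω = 1} = ENNReal.ofReal (∫ ω, X ω ∂μ) ∧
      μ {ω | X ω = 0} = ENNReal.ofReal (1 - ∫ ω, X ω ∂μ) := by
  have hA : MeasurableSet {ω | X ω = 1} := hX (measurableSet_singleton 1)
  have hint : ∫ ω, X ω ∂μ = μ.real {ω | X ω = 1} := by
    rw [← integral_indicator_one hA]
    refine integral_congr_ae ?_
    filter_upwards [h01] with ω h
    rcases h with h | h <;> simp [h]
  have hzero : {ω | X ω = 0} =ᵐ[μ] ({ω | X ω = 1}ᶜ : Set Ω) := by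
    filter_upwards [h01] with ω h
    change (X ω = 0) = (X ω ≠ 1)
    rcases h with h | h <;> simp [h]
  refine ⟨by rw [hint, ofReal_measureReal], ?_⟩
  rw [measure_congr hzero, prob_compl_eq_one_sub hA, hint,
    ENNReal.ofReal_sub _ measureReal_nonneg, ENNReal.ofReal_one, ofReal_measureReal]

end

/-- `coinFiltration n` is generated by the tosses `ω 0, …, ω (n - 1)`, which determine
`E_{·,n}`; the toss `ω n` decides step `n + 1`. -/
def coinFiltration : Filtration ℕ (MeasurableSpace.pi : MeasurableSpace (ℕ → Bool)) where
  seq n := Filtration.piFinset (range n)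
  mono' _ _ h := Filtration.piFinset.mono (range_mono h)
  le' n := Filtration.piFinset.le (range n)

lemma measurable_coinFiltration_of_forall_lt_eq {β : Type*} [MeasurableSpace β] {n : ℕ}
    {g : (ℕ → Bool) → β} (hg : ∀ ω ω', (∀ i < n, ω i = ω' i) → g ω = g ω') :
    Measurable[coinFiltration n] g := by
  have hfactor : g = (fun y => g fun i => if h : i ∈ range n then y ⟨i, h⟩ else false) ∘
      (range n).restrict := by
    funext ω
    exact hg _ _ fun i hi => by simp [hi]
  rw [hfactor]
  exact (measurable_of_finite _).comp (Measurable.of_comap_le le_rfl)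

lemma measurableSet_coin (n : ℕ) (b : Bool) : MeasurableSet {ω : ℕ → Bool | ω n = b} :=
  measurableSet_eq_fun (measurable_pi_apply n) measurable_const

lemma abs_coinSign (n : ℕ) (ω : ℕ → Bool) : |coinSign n ω| = 1 := by
  unfold coinSign; split_ifs <;> simp

lemma measurable_coinSign (n : ℕ) : Measurable (coinSign n) :=
  Measurable.ite (measurableSet_coin n false) measurable_const measurable_const

lemma integrable_coinSign {μ : Measure (ℕ → Bool)} [IsFiniteMeasure μ] (n : ℕ) :
    Integrable (coinSign n) μ :=
  .of_bound (measurable_coinSign n).aestronglyMeasurable 1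
    (ae_of_all _ fun ω => (abs_coinSign n ω).le)

section FairCoin

variable {μ : Measure (ℕ → Bool)}
    (hμ : ∀ (s : Finset ℕ) (f : ℕ → Bool), μ {ω | ∀ n ∈ s, ω n = f n} = (1 / 2 : ENNReal) ^ s.card)
include hμ

lemma measure_cylinder_inter_coin (n : ℕ) (y : range n → Bool) (b : Bool) :
    μ ((range n).restrict ⁻¹' {y} ∩ {ω | ω n = b}) = (1 / 2 : ENNReal) ^ (n + 1) := by
  rw [← card_range (n + 1), ← hμ _ fun i => if h : i ∈ range n then y ⟨i, h⟩ else b]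
  congr 1
  ext ω
  simp +contextual [funext_iff, Nat.le_iff_lt_or_eq, or_imp, forall_and]

lemma measure_inter_coin_false {n : ℕ} {s : Set (ℕ → Bool)}
    (hs : MeasurableSet[coinFiltration n] s) :
    μ (s ∩ {ω | ω n = false}) = μ (s ∩ {ω | ω n = true}) := by
  obtain ⟨t, -, rfl⟩ := hs
  obtain ⟨T, rfl⟩ := t.toFinite.exists_finset_coe
  have hfiber : ∀ b, μ ((range n).restrict ⁻¹' T ∩ {ω | ω n = b})
      = ∑ _y ∈ T, (1 / 2 : ENNReal) ^ (n + 1) := fun b => by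
    rw [← Measure.restrict_apply' (measurableSet_coin n b), ← sum_measure_preimage_singleton]
    · refine sum_congr rfl fun y _ => ?_
      rw [Measure.restrict_apply' (measurableSet_coin n b), measure_cylinder_inter_coin hμ]
    · exact fun y _ => (range n).measurable_restrict (measurableSet_singleton y)
  rw [hfiber, hfiber]

variable [IsFiniteMeasure μ]

lemma setIntegral_coinSign {n : ℕ} {s : Set (ℕ → Bool)} (hs : MeasurableSet[coinFiltration n] s) :
    ∫ ω in s, coinSign n ω ∂μ = 0 := by
  have hs' : MeasurableSet s := coinFiltration.le n s hs
  have hfalse : ∫ ω in s ∩ {ω | ω n = false}, coinSign n ω ∂μ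
      = μ.real (s ∩ {ω | ω n = false}) := by
    rw [setIntegral_congr_fun (f := coinSign n) (g := fun _ => (1 : ℝ))
      (hs'.inter (measurableSet_coin n false)) fun ω hω => if_pos hω.2,
      setIntegral_const, smul_eq_mul, mul_one]
  have htrue : ∫ ω in s \ {ω | ω n = false}, coinSign n ω ∂μ
      = -μ.real (s ∩ {ω | ω n = true}) := by
    have hsdiff : s \ {ω | ω n = false} = s ∩ {ω | ω n = true} := by ext; simp
    rw [hsdiff, setIntegral_congr_fun (f := coinSign n) (g := fun _ => (-1 : ℝ))
      (hs'.inter (measurableSet_coin n true))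
      fun ω (hω : _ ∧ ω n = true) => if_neg (by simp [hω.2]),
      setIntegral_const, smul_eq_mul, mul_neg_one]
  rw [← integral_inter_add_sdiff (measurableSet_coin n false) (integrable_coinSign n).integrableOn,
    hfalse, htrue, measureReal_def, measureReal_def, measure_inter_coin_false hμ hs,
    add_neg_cancel]

lemma condExp_coinSign (n : ℕ) : μ[coinSign n | coinFiltration n] =ᵐ[μ] 0 :=
  (ae_eq_condExp_of_forall_setIntegral_eq (coinFiltration.le n) (integrable_coinSign n)
    (fun _ _ _ => integrableOn_zero)
    (fun _ hs _ => by rw [setIntegral_coinSign hμ hs, integral_zero])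
    aestronglyMeasurable_zero).symm

lemma martingale_of_sub_eq_mul_coinSign {f g : ℕ → (ℕ → Bool) → ℝ} {C : ℝ}
    (hf : StronglyAdapted coinFiltration f) (hfi : ∀ n, Integrable (f n) μ)
    (hg : StronglyAdapted coinFiltration g) (hgC : ∀ n ω, |g n ω| ≤ C)
    (hstep : ∀ n, f (n + 1) - f n = g n * coinSign n) :
    Martingale f coinFiltration μ := by
  refine martingale_of_condExp_sub_eq_zero_nat hf hfi fun n => ?_
  have hgi : Integrable (g n * coinSign n) μ :=
    (integrable_coinSign n).bdd_mul ((hg n).mono (coinFiltration.le n)).aestronglyMeasurable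
      (ae_of_all _ fun ω => (hgC n ω).trans_eq' (Real.norm_eq_abs _))
  filter_upwards [condExp_mul_of_stronglyMeasurable_left (hg n) hgi (integrable_coinSign n),
    condExp_coinSign hμ n] with ω hmul hzero
  simp [hstep, hmul, hzero]

end FairCoin

section Polarization

variable {m : ℕ} {ε : ℕ → ℝ}

lemma stronglyAdapted_cumEproc (k : ℕ) :
    StronglyAdapted coinFiltration fun n => cumEproc m ε k n := fun _ =>
  (measurable_coinFiltration_of_forall_lt_eq fun _ _ h =>
    sum_congr rfl fun t _ => Eproc_eq_of_forall_lt_eq h t).stronglyMeasurable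

variable (hε : ∀ r ≤ m, 0 ≤ ε r) (hsum : ∑ r ∈ range (m + 1), ε r = 1) {k : ℕ} (hk : k ≤ m + 1)
include hε hsum hk

lemma abs_cumEproc_le_one (n : ℕ) (ω : ℕ → Bool) : |cumEproc m ε k n ω| ≤ 1 := by
  obtain ⟨h0, h1⟩ := cumEproc_mem_Icc hε hsum hk n ω
  exact abs_le.2 ⟨by linarith, h1⟩

variable {μ : Measure (ℕ → Bool)} [IsProbabilityMeasure μ]
    (hμ : ∀ (s : Finset ℕ) (f : ℕ → Bool), μ {ω | ∀ n ∈ s, ω n = f n} = (1 / 2 : ENNReal) ^ s.card)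
include hμ

lemma martingale_cumEproc : Martingale (fun n => cumEproc m ε k n) coinFiltration μ := by
  have hadapted := stronglyAdapted_cumEproc (m := m) (ε := ε) k
  refine martingale_of_sub_eq_mul_coinSign hμ hadapted
    (fun n => .of_bound ((hadapted n).mono (coinFiltration.le n)).aestronglyMeasurable 1
      (ae_of_all _ (abs_cumEproc_le_one hε hsum hk n)))
    (g := fun n ω => cumEproc m ε k n ω * (1 - cumEproc m ε k n ω)) (C := 1)
    (fun n => (hadapted n).mul (stronglyMeasurable_const.sub (hadapted n)))
    (fun n ω => ?_) fun n => funext fun ω => ?_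
  · obtain ⟨h0, h1⟩ := cumEproc_mem_Icc hε hsum hk n ω
    rw [abs_of_nonneg (by nlinarith)]
    nlinarith
  · simp [cumEproc_succ hsum hk]

lemma exists_ae_tendsto_cumEproc :
    ∃ G : (ℕ → Bool) → ℝ, Measurable G ∧ Integrable G μ ∧
      (∀ᵐ ω ∂μ, Tendsto (fun n => cumEproc m ε k n ω) atTop (𝓝 (G ω)) ∧ (G ω = 0 ∨ G ω = 1)) ∧
      ∫ ω, G ω ∂μ = ∑ t ∈ range k, ε t := by
  have hmart := martingale_cumEproc hε hsum hk hμ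
  have hF := abs_cumEproc_le_one hε hsum hk
  set G := coinFiltration.limitProcess (fun n => cumEproc m ε k n) μ
  have hGm : Measurable G := Filtration.stronglyMeasurable_limit_process'.measurable
  have hae : ∀ᵐ ω ∂μ,
      Tendsto (fun n => cumEproc m ε k n ω) atTop (𝓝 (G ω)) ∧ (G ω = 0 ∨ G ω = 1) := by
    filter_upwards [hmart.ae_tendsto_limitProcess_of_abs_le hF] with ω hω
    refine ⟨hω, eq_zero_or_eq_one_of_tendsto_of_abs_sub_eq hω fun n => ?_⟩
    rw [cumEproc_succ hsum hk, add_sub_cancel_left, abs_mul, abs_coinSign, mul_one]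
  refine ⟨G, hGm, .of_bound hGm.aestronglyMeasurable 1 ?_, hae, ?_⟩
  · filter_upwards [hae] with ω h
    rcases h.2 with h | h <;> simp [h]
  · rw [hmart.integral_limitProcess_of_abs_le hF]
    simp [cumEproc, Eproc]

end Polarization

theorem stmt_17_general (m : ℕ)
    (ε : ℕ → ℝ) (hε : ∀ r ≤ m, 0 ≤ ε r) (hsum : ∑ r ∈ Finset.range (m + 1), ε r = 1)
    (μ : Measure (ℕ → Bool)) [IsProbabilityMeasure μ]
    (hμ : ∀ (s : Finset ℕ) (f : ℕ → Bool),
      μ {ω | ∀ n ∈ s, ω n = f n} = (1 / 2 : ENNReal) ^ s.card) :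
    ∀ r ≤ m, ∃ Einf : (ℕ → Bool) → ℝ,
      (∀ᵐ ω ∂μ,
        Tendsto (fun n => Eproc m ε n ω r) atTop (nhds (Einf ω)) ∧ (Einf ω = 0 ∨ Einf ω = 1))
      ∧ μ {ω | Einf ω = 1} = ENNReal.ofReal (ε r)
      ∧ μ {ω | Einf ω = 0} = ENNReal.ofReal (1 - ε r) := by
  intro r hr
  obtain ⟨G, hGm, hGi, hG, hGint⟩ :=
    exists_ae_tendsto_cumEproc hε hsum (k := r) (by omega) hμ
  obtain ⟨H, hHm, hHi, hH, hHint⟩ :=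
    exists_ae_tendsto_cumEproc hε hsum (k := r + 1) (by omega) hμ
  have hae : ∀ᵐ ω ∂μ, Tendsto (fun n => Eproc m ε n ω r) atTop (𝓝 (H ω - G ω)) ∧
      (H ω - G ω = 0 ∨ H ω - G ω = 1) := by
    filter_upwards [hG, hH] with ω ⟨hGω, hG01⟩ ⟨hHω, hH01⟩
    have hE : ∀ n, Eproc m ε n ω r = cumEproc m ε (r + 1) n ω - cumEproc m ε r n ω :=
      fun n => by simp [cumEproc, sum_range_succ]
    have hle : G ω ≤ H ω :=
      le_of_tendsto_of_tendsto' hGω hHω fun n => by linarith [hE n, Eproc_nonneg hε n ω hr]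
    refine ⟨by simpa only [hE] using hHω.sub hGω, ?_⟩
    rcases hG01 with h | h <;> rcases hH01 with h' | h' <;> simp [h, h'] at hle ⊢
    linarith
  have hint : ∫ ω, H ω - G ω ∂μ = ε r := by
    rw [integral_sub hHi hGi, hHint, hGint, sum_range_succ, add_sub_cancel_left]
  obtain ⟨h1, h0⟩ := measure_eq_ofReal_integral_of_ae_eq_zero_or_eq_one
    (X := fun ω => H ω - G ω) (hHm.sub hGm) (hae.mono fun _ h => h.2)
  exact ⟨fun ω => H ω - G ω, hae, by rw [h1, hint], by rw [h0, hint]⟩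

/-- Under the fair-coin product measure `μ` on `Ω = ℕ → Bool` (characterized by its values on
cylinder sets), for each `0 ≤ r ≤ m` the sequence `(E_{r,n})_n` converges `μ`-almost surely
to a `{0,1}`-valued random variable `E_{r,∞}` with `μ(E_{r,∞} = 1) = ε_r`, hence
`μ(E_{r,∞} = 0) = 1 − ε_r`. -/
theorem stmt_17 (p m : ℕ) (hp : p.Prime) (hm : 1 ≤ m)
    (ε : ℕ → ℝ) (hε : ∀ r ≤ m, 0 ≤ ε r) (hsum : ∑ r ∈ Finset.range (m + 1), ε r = 1)
    (μ : Measure (ℕ → Bool)) [IsProbabilityMeasure μ]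
    (hμ : ∀ (s : Finset ℕ) (f : ℕ → Bool),
      μ {ω | ∀ n ∈ s, ω n = f n} = (1 / 2 : ENNReal) ^ s.card) :
    ∀ r ≤ m, ∃ Einf : (ℕ → Bool) → ℝ,
      (∀ᵐ ω ∂μ,
        Tendsto (fun n => Eproc m ε n ω r) atTop (nhds (Einf ω)) ∧ (Einf ω = 0 ∨ Einf ω = 1))
      ∧ μ {ω | Einf ω = 1} = ENNReal.ofReal (ε r)
      ∧ μ {ω | Einf ω = 0} = ENNReal.ofReal (1 - ε r) :=
  stmt_17_general m ε hε hsum μ hμ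
end
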